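/- The group of the toroidal hypermap (3,3,3)_{(s,0)} is a subgroup of index 2 in the group of the toroidal map {6,3}_{(s,0)}; specifically, if K = ⟨τ0,τ1,τ2⟩ is the quotient of the Coxeter group [6,3] by the normal closure of (τ0τ1τ2)^{2s}, then G = ⟨τ0τ1τ0, τ1, τ2⟩ has index 2 in K. -/

import Mathlib

/-- Relations of the group of the toroidal map {6,3}_{(s,0)}: the Coxeter group [6,3]
(generators τ0, τ1, τ2 with τi² = (τ0τ1)⁶ = (τ1τ2)³ = (τ0τ2)² = 1) factored by the
normal closure of (τ0τ1τ2)^{2s}. -/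
def mapRels (s : ℕ) : Set (FreeGroup (Fin 3)) :=
  {r | ∃ i : Fin 3, r = FreeGroup.of i ^ 2} ∪
  {(FreeGroup.of 0 * FreeGroup.of 1) ^ 6, (FreeGroup.of 1 * FreeGroup.of 2) ^ 3,
   (FreeGroup.of 0 * FreeGroup.of 2) ^ 2,
   (FreeGroup.of 0 * FreeGroup.of 1 * FreeGroup.of 2) ^ (2 * s)}

/-- The group of the toroidal map {6,3}_{(s,0)}. -/
abbrev Map63 (s : ℕ) := PresentedGroup (mapRels s)

/-!
`H = ⟨τ0τ1τ0, τ1, τ2⟩` is normalised by the involution `τ0`, because conjugation by `τ0` swaps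
`τ1` with `τ0τ1τ0` and fixes `τ2`. As `τ0` together with `H` generates the whole group, every
element lies in `H` or in `τ0 H`. Finally `τ0 ∉ H`: every relator contains `τ0` an even number of
times, so `τ0 ↦ -1`, `τ1, τ2 ↦ 1` is a character of the group, and it is trivial on `H`.
-/

namespace Subgroup

variable {G : Type*} [Group G]

theorem conj_mem_closure_of_forall_mem {S : Set G} {t : G}
    (hS : ∀ s ∈ S, t * s * t⁻¹ ∈ closure S) {x : G} (hx : x ∈ closure S) :
    t * x * t⁻¹ ∈ closure S :=
  (closure_le ((closure S).comap (MulAut.conj t).toMonoidHom)).2 hS hx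

theorem index_eq_two_of_involution {H : Subgroup G} {t : G} (ht : t * t = 1)
    (hconj : ∀ h ∈ H, t * h * t⁻¹ ∈ H) (hgen : closure (insert t (H : Set G)) = ⊤)
    (htH : t ∉ H) : H.index = 2 := by
  have htt : ∀ x, t * (t * x) = x := fun x => by rw [← mul_assoc, ht, one_mul]
  let C : Subgroup G :=
    { carrier := {x | t * x ∈ H ∨ x ∈ H}
      one_mem' := Or.inr H.one_mem
      mul_mem' := by
        rintro a b (ha | ha) (hb | hb)
        · refine Or.inr ?_
          have : a * b = t * (t * a) * t⁻¹ * (t * b) := by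
            simp only [mul_assoc, inv_mul_cancel_left, htt]
          exact this ▸ H.mul_mem (hconj _ ha) hb
        · exact Or.inl (mul_assoc t a b ▸ H.mul_mem ha hb)
        · refine Or.inl ?_
          have : t * (a * b) = t * a * t⁻¹ * (t * b) := by group
          exact this ▸ H.mul_mem (hconj _ ha) hb
        · exact Or.inr (H.mul_mem ha hb)
      inv_mem' := by
        rintro a (ha | ha)
        · refine Or.inl ?_
          have : t * a⁻¹ = (t * (t * a) * t⁻¹)⁻¹ := by
            rw [htt, mul_inv_rev, inv_inv]
          exact this ▸ H.inv_mem (hconj _ ha)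
        · exact Or.inr (H.inv_mem ha) }
  have hC : closure (insert t (H : Set G)) ≤ C :=
    (closure_le C).2 (Set.insert_subset (Or.inl (ht ▸ H.one_mem)) fun _ => Or.inr)
  rw [index_eq_two_iff_exists_notMem_and']
  exact ⟨t, htH, fun b => hC (hgen ▸ mem_top b)⟩

end Subgroup

namespace Map63

open PresentedGroup Subgroup

variable {s : ℕ}

theorem of_mul_self (i : Fin 3) : (of i : Map63 s) * of i = 1 := by
  have h : (of i : Map63 s) ^ 2 = 1 := one_of_mem (x := FreeGroup.of i ^ 2) (Or.inl ⟨i, rfl⟩)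
  rwa [pow_two] at h

theorem inv_of (i : Fin 3) : (of i : Map63 s)⁻¹ = of i :=
  inv_eq_of_mul_eq_one_right (of_mul_self i)

theorem of_zero_mul_of_two_mul_of_zero : (of 0 * of 2 * of 0 : Map63 s) = of 2 := by
  have h : (of 0 * of 2 : Map63 s) ^ 2 = 1 :=
    one_of_mem (x := (FreeGroup.of 0 * FreeGroup.of 2) ^ 2) (by simp [mapRels])
  rwa [pow_two, ← mul_assoc, mul_eq_one_iff_eq_inv, inv_of] at h

theorem lift_sign_of_mem_mapRels {r : FreeGroup (Fin 3)} (hr : r ∈ mapRels s) :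
    FreeGroup.lift ![-1, 1, 1] r = (1 : ℤˣ) := by
  rcases hr with ⟨i, rfl⟩ | rfl | rfl | rfl | rfl <;>
    simp [Int.units_pow_eq_pow_mod_two]

def sign (s : ℕ) : Map63 s →* ℤˣ :=
  toGroup fun _ => lift_sign_of_mem_mapRels

theorem sign_of (i : Fin 3) : sign s (of i) = ![-1, 1, 1] i :=
  toGroup.of _

def hypermapSubgroup (s : ℕ) : Subgroup (Map63 s) :=
  closure {of 0 * of 1 * of 0, of 1, of 2}

theorem of_zero_conj_mem_hypermapSubgroup {x : Map63 s} (hx : x ∈ hypermapSubgroup s) :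
    of 0 * x * (of 0)⁻¹ ∈ hypermapSubgroup s := by
  refine conj_mem_closure_of_forall_mem ?_ hx
  rintro _ (rfl | rfl | rfl)
  · rw [show (of 0 * (of 0 * of 1 * of 0) * (of 0)⁻¹ : Map63 s) = of 0 * of 0 * of 1 by group,
      of_mul_self, one_mul]
    exact subset_closure (Or.inr (Or.inl rfl))
  · rw [inv_of]
    exact subset_closure (Or.inl rfl)
  · rw [inv_of, of_zero_mul_of_two_mul_of_zero]
    exact subset_closure (Or.inr (Or.inr rfl))

theorem closure_insert_of_zero_hypermapSubgroup :
    closure (insert (of 0) (hypermapSubgroup s : Set (Map63 s))) = ⊤ := by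
  rw [eq_top_iff, ← closure_range_of]
  refine closure_mono ?_
  rintro _ ⟨i, rfl⟩
  fin_cases i
  · exact Set.mem_insert _ _
  · exact Set.mem_insert_of_mem _ (subset_closure (Or.inr (Or.inl rfl)))
  · exact Set.mem_insert_of_mem _ (subset_closure (Or.inr (Or.inr rfl)))

theorem of_zero_notMem_hypermapSubgroup : (of 0 : Map63 s) ∉ hypermapSubgroup s := by
  have hker : hypermapSubgroup s ≤ (sign s).ker := by
    refine (closure_le _).2 ?_
    rintro _ (rfl | rfl | rfl) <;> simp [sign_of]
  intro h0
  simpa [sign_of] using hker h0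

end Map63

theorem stmt12_general (s : ℕ) :
    let τ : Fin 3 → Map63 s := fun i => PresentedGroup.of i
    (Subgroup.closure {τ 0 * τ 1 * τ 0, τ 1, τ 2} : Subgroup (Map63 s)).index = 2 :=
  Subgroup.index_eq_two_of_involution (Map63.of_mul_self 0)
    (fun _ => Map63.of_zero_conj_mem_hypermapSubgroup)
    Map63.closure_insert_of_zero_hypermapSubgroup Map63.of_zero_notMem_hypermapSubgroup

/-- The hypermap subgroup `⟨τ0τ1τ0, τ1, τ2⟩` has index 2 in the group of {6,3}_{(s,0)}. -/
theorem stmt12 (s : ℕ) (hs : 2 ≤ s) :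
    let τ : Fin 3 → Map63 s := fun i => PresentedGroup.of i
    (Subgroup.closure {τ 0 * τ 1 * τ 0, τ 1, τ 2} : Subgroup (Map63 s)).index = 2 :=
  stmt12_general s
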